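/- Let c ≥ 2 and consider H_{c,2} with its cyclic ample framing, and let ρ_∘ := ρ_{({1},{2,…,c+1})}. Then: (a) a good non-exceptional route ρ_{(A,B)} of H_{c,2} is compatible with ρ_∘ if and only if 1 ∈ A; and (b) the map (A,B) ↦ ({1} ∪ {i+1 : i ∈ A}, {i+1 : i ∈ B}) is a bijection from the ordered partitions of {1,…,c} into two nonempty parts onto the ordered partitions (A′,B′) of {1,…,c+1} into two nonempty parts with 1 ∈ A′ and A′ ≠ {1}, and two good non-exceptional routes of H_{c−1,2} are compatible if and only if the routes of H_{c,2} indexed by their images are compatible. (Hence the facet of the mutoperhedron 𝓜_c indexed by ({1},{2,…,c+1}) is combinatorially isomorphic to 𝓜_{c−1}.) -/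

import Mathlib

namespace PaperDKK

/-- Edge colours for framings. -/
inductive Col : Type
  | red : Col
  | blue : Col
  deriving DecidableEq

variable {V E : Type*}

/-- The list of vertices visited by a walk. -/
def walkVerts (tl hd : E → V) : List E → List V
  | [] => []
  | e :: es => tl e :: (e :: es).map hd

/-- A walk: a nonempty list of consecutively composable edges. -/
def IsWalk (tl hd : E → V) (w : List E) : Prop :=
  w ≠ [] ∧ List.Chain' (fun e f => hd e = tl f) w

/-- A source: a vertex that is the head of no edge. -/
def IsSource (tl hd : E → V) (v : V) : Prop := ∀ e : E, hd e ≠ v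

/-- A sink: a vertex that is the tail of no edge. -/
def IsSink (tl hd : E → V) (v : V) : Prop := ∀ e : E, tl e ≠ v

/-- An internal vertex: neither a source nor a sink. -/
def IsInternal (tl hd : E → V) (v : V) : Prop :=
  ¬ IsSource tl hd v ∧ ¬ IsSink tl hd v

/-- A minimal directed cycle: a closed walk visiting no vertex twice. -/
def IsMinCycle (tl hd : E → V) (w : List E) : Prop :=
  IsWalk tl hd w ∧
  (∀ e ∈ w.getLast?, ∀ f ∈ w.head?, hd e = tl f) ∧
  (w.map hd).Nodup

/-- A walk from a source to a sink. -/
def IsSrcSnkWalk (tl hd : E → V) (w : List E) : Prop :=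
  IsWalk tl hd w ∧
  (∀ e ∈ w.head?, IsSource tl hd (tl e)) ∧
  (∀ e ∈ w.getLast?, IsSink tl hd (hd e))

/-- A route: a minimal directed cycle or a source-to-sink walk. -/
def IsRoute (tl hd : E → V) (w : List E) : Prop :=
  IsMinCycle tl hd w ∨ IsSrcSnkWalk tl hd w

/-- A good route: a source-to-sink walk none of whose contiguous subwalks is a
minimal directed cycle. -/
def IsGoodRoute (tl hd : E → V) (w : List E) : Prop :=
  IsSrcSnkWalk tl hd w ∧ ∀ u : List E, u <:+: w → ¬ IsMinCycle tl hd u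

/-- A monochromatic list of edges. -/
def Mono (col : E → Col) (w : List E) : Prop :=
  ∃ b : Col, ∀ e ∈ w, col e = b

/-- Cyclic ample framing: at every internal vertex there is exactly one red and
one blue incoming edge and exactly one red and one blue outgoing edge, and every
minimal directed cycle is monochromatic. -/
def CyclicAmpleFraming (tl hd : E → V) (col : E → Col) : Prop :=
  (∀ v : V, IsInternal tl hd v →
    (∃! e : E, hd e = v ∧ col e = Col.red) ∧
    (∃! e : E, hd e = v ∧ col e = Col.blue) ∧
    (∃! e : E, tl e = v ∧ col e = Col.red) ∧
    (∃! e : E, tl e = v ∧ col e = Col.blue)) ∧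
  (∀ w : List E, IsMinCycle tl hd w → Mono col w)

/-- Incompatibility of two source-to-sink walks: they admit decompositions
`P·S·Q` and `P′·S·Q′` along a common (possibly vertex-only) subwalk `S`, with
the last edge of `P` and the first edge of `Q′` blue while the first edge of
`Q` and the last edge of `P′` are red.  Here the `P`-part is `P ++ [p]` and the
`Q`-part is `q :: Q`, so `p` is the last edge of the `P`-part and `q` the first
edge of the `Q`-part. -/
def Incompat (tl hd : E → V) (col : E → Col) (w w' : List E) : Prop :=
  IsSrcSnkWalk tl hd w ∧ IsSrcSnkWalk tl hd w' ∧
  ∃ (P S Q P' Q' : List E) (p q p' q' : E),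
    ((w = P ++ p :: (S ++ q :: Q) ∧ w' = P' ++ p' :: (S ++ q' :: Q')) ∨
     (w' = P ++ p :: (S ++ q :: Q) ∧ w = P' ++ p' :: (S ++ q' :: Q'))) ∧
    hd p = hd p' ∧
    col p = Col.blue ∧ col q' = Col.blue ∧ col q = Col.red ∧ col p' = Col.red

/-- A route is exceptional if it is compatible with every route. -/
def Exceptional (tl hd : E → V) (col : E → Col) (w : List E) : Prop :=
  IsRoute tl hd w ∧ ∀ w' : List E, IsRoute tl hd w' → ¬ Incompat tl hd col w w'

/-- Connectivity of the underlying undirected graph. -/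
def Connected (tl hd : E → V) : Prop :=
  ∀ v w : V,
    Relation.ReflTransGen
      (fun x y => ∃ e : E, (tl e = x ∧ hd e = y) ∨ (tl e = y ∧ hd e = x)) v w

/-- Every source and every sink has degree one. -/
def DegreeOneEnds (tl hd : E → V) : Prop :=
  (∀ v : V, IsSource tl hd v → ∃! e : E, tl e = v) ∧
  (∀ v : V, IsSink tl hd v → ∃! e : E, hd e = v)

/-- No idle edges: no edge between internal vertices is the unique outgoing edge
of its tail or the unique incoming edge of its head. -/
def NoIdleEdges (tl hd : E → V) : Prop :=
  ∀ e : E, IsInternal tl hd (tl e) → IsInternal tl hd (hd e) →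
    (∃ f : E, f ≠ e ∧ tl f = tl e) ∧ (∃ f : E, f ≠ e ∧ hd f = hd e)

/-- Vertices of the graph `H_{c,p}` of `c` nested `p`-cycles:
`(a,b)` with `0 ≤ a ≤ c+1` and `b ∈ {1,…,p}` (here 0-indexed). -/
abbrev HVtx (c p : ℕ) : Type := Fin (c + 2) × Fin p

/-- Edges of `H_{c,p}` : vertical edges `(a,b) → (a+1,b)` for `0 ≤ a ≤ c`,
and row-cycle edges `(a,b) → (a, b+1 mod p)` for `1 ≤ a ≤ c`. -/
abbrev HEdg (c p : ℕ) : Type := (Fin (c + 1) × Fin p) ⊕ (Fin c × Fin p)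

/-- Successor mod `p`. -/
def finNext {p : ℕ} (b : Fin p) : Fin p :=
  ⟨(b.1 + 1) % p, Nat.mod_lt _ (Nat.lt_of_le_of_lt (Nat.zero_le _) b.isLt)⟩

def Htl (c p : ℕ) : HEdg c p → HVtx c p
  | Sum.inl (a, b) => (Fin.castSucc a, b)
  | Sum.inr (a, b) => (Fin.castSucc (Fin.succ a), b)

def Hhd (c p : ℕ) : HEdg c p → HVtx c p
  | Sum.inl (a, b) => (Fin.succ a, b)
  | Sum.inr (a, b) => (Fin.castSucc (Fin.succ a), finNext b)

/-- The cyclic ample framing of `H_{c,p}` : row-cycle edges are red, all the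
remaining edges are blue. -/
def Hcol (c p : ℕ) : HEdg c p → Col
  | Sum.inl _ => Col.blue
  | Sum.inr _ => Col.red

/-- The blue edge `u_i` of `H_{c,2}` (0-indexed: `u i` joins rows `i` and `i+1`
in column 1). -/
def uEdge (c : ℕ) (i : Fin (c + 1)) : HEdg c 2 := Sum.inl (i, 0)

/-- The blue edge `d_i` of `H_{c,2}` (0-indexed, column 2). -/
def dEdge (c : ℕ) (i : Fin (c + 1)) : HEdg c 2 := Sum.inl (i, 1)

/-- `RouteOf c A B w` : `w` is the good route `ρ_{(A,B)}` of `H_{c,2}`, i.e. the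
good route whose blue edges are exactly `{u_i : i ∈ A} ∪ {d_j : j ∈ B}`. -/
def RouteOf (c : ℕ) (A B : Finset (Fin (c + 1))) (w : List (HEdg c 2)) : Prop :=
  IsGoodRoute (Htl c 2) (Hhd c 2) w ∧
  (∀ i : Fin (c + 1), uEdge c i ∈ w ↔ i ∈ A) ∧
  (∀ i : Fin (c + 1), dEdge c i ∈ w ↔ i ∈ B)

/-- Compatibility of routes of `H_{c,2}` with its cyclic ample framing. -/
def HCompat (c : ℕ) (w w' : List (HEdg c 2)) : Prop :=
  ¬ Incompat (Htl c 2) (Hhd c 2) (Hcol c 2) w w'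

/-- The map `(A,B) ↦ ({1} ∪ {i+1 : i ∈ A}, {i+1 : i ∈ B})` on ordered
bipartitions (0-indexed: `1` becomes `0` and `i+1` becomes `Fin.succ i`). -/
def PsiMap (m : ℕ) (AB : Finset (Fin (m + 1)) × Finset (Fin (m + 1))) :
    Finset (Fin (m + 2)) × Finset (Fin (m + 2)) :=
  (insert 0 (AB.1.image Fin.succ), AB.2.image Fin.succ)

/-! ### Auxiliary development -/

section Aux

lemma finNext_ne (b : Fin 2) : finNext b ≠ b := by revert b; decide

lemma finNext_finNext (b : Fin 2) : finNext (finNext b) = b := by revert b; decide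

lemma fin2_eq_finNext_of_ne {x y : Fin 2} (h : x ≠ y) : finNext x = y := by
  revert h; revert x y; decide

lemma fin2_eq_of_ne_finNext {x y : Fin 2} (h : x ≠ finNext y) : x = y := by
  revert h; revert x y; decide

lemma fin2_ne_of_ne {x y : Fin 2} (h : x ≠ y) : finNext x ≠ finNext y := by
  revert h; revert x y; decide

lemma fin2_eq_one_of_ne_zero {x : Fin 2} (h : x ≠ 0) : x = 1 := by
  revert h; revert x; decide

lemma fin2_eq_of_iff {x y : Fin 2} (h : x = 0 ↔ y = 0) : x = y := by
  revert h; revert x y; decide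

/-- The canonical good route of `H_{c,2}` determined by the column function
`F`, starting at level `a`. -/
def seg (c : ℕ) (F : ℕ → Fin 2) (a : ℕ) : List (HEdg c 2) :=
  if h : a < c + 1 then
    Sum.inl (⟨a, h⟩, F a) ::
      (if h2 : a + 1 < c + 1 then
        (if F (a + 1) = F a then seg c F (a + 1)
         else Sum.inr (⟨a, by omega⟩, F a) :: seg c F (a + 1))
       else [])
  else []
termination_by c + 1 - a
decreasing_by all_goals omega

lemma seg_nil {c a : ℕ} (F : ℕ → Fin 2) (h : c + 1 ≤ a) : seg c F a = [] := by
  rw [seg]; simp [Nat.not_lt.2 h]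

lemma seg_last {c : ℕ} (F : ℕ → Fin 2) :
    seg c F c = [Sum.inl (⟨c, by omega⟩, F c)] := by
  rw [seg]; simp

lemma seg_stay {c a : ℕ} (F : ℕ → Fin 2) (h : a < c) (hF : F (a + 1) = F a) :
    seg c F a = Sum.inl (⟨a, by omega⟩, F a) :: seg c F (a + 1) := by
  rw [seg]
  have h1 : a < c + 1 := by omega
  have h2 : a + 1 < c + 1 := by omega
  simp [h1, h2, hF]

lemma seg_move {c a : ℕ} (F : ℕ → Fin 2) (h : a < c) (hF : F (a + 1) ≠ F a) :
    seg c F a = Sum.inl (⟨a, by omega⟩, F a) ::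
      Sum.inr (⟨a, h⟩, F a) :: seg c F (a + 1) := by
  rw [seg]
  have h1 : a < c + 1 := by omega
  have h2 : a + 1 < c + 1 := by omega
  simp [h1, h2, hF]

lemma seg_cons {c a : ℕ} (F : ℕ → Fin 2) (h : a ≤ c) :
    ∃ t, seg c F a = Sum.inl (⟨a, by omega⟩, F a) :: t := by
  rcases Nat.lt_or_ge a c with h' | h'
  · by_cases hF : F (a + 1) = F a
    · exact ⟨_, seg_stay F h' hF⟩
    · exact ⟨_, seg_move F h' hF⟩
  · have : a = c := le_antisymm h h'
    subst this
    exact ⟨_, seg_last F⟩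

lemma seg_ne_nil {c a : ℕ} (F : ℕ → Fin 2) (h : a ≤ c) : seg c F a ≠ [] := by
  obtain ⟨t, ht⟩ := seg_cons F h
  simp [ht]

lemma seg_congr_fuel {c : ℕ} {F G : ℕ → Fin 2} :
    ∀ n a, c + 1 ≤ a + n → (∀ k, a ≤ k → F k = G k) → seg c F a = seg c G a := by
  intro n
  induction n with
  | zero =>
    intro a h hFG
    rw [seg_nil F (by omega), seg_nil G (by omega)]
  | succ n IH =>
    intro a h hFG
    rcases Nat.lt_or_ge a (c + 1) with h' | h'
    · have ha : F a = G a := hFG a le_rfl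
      rcases Nat.lt_or_ge a c with hc | hc
      · have ha1 : F (a + 1) = G (a + 1) := hFG (a + 1) (by omega)
        have IH' := IH (a + 1) (by omega) (fun k hk => hFG k (by omega))
        by_cases hF : F (a + 1) = F a
        · rw [seg_stay F hc hF, seg_stay G hc (by rw [← ha1, ← ha]; exact hF),
            ha, IH']
        · rw [seg_move F hc hF, seg_move G hc (by rw [← ha1, ← ha]; exact hF),
            ha, IH']
      · have : a = c := by omega
        subst this
        rw [seg_last, seg_last, ha]
    · rw [seg_nil F h', seg_nil G h']

lemma seg_congr {c : ℕ} {F G : ℕ → Fin 2} (a : ℕ)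
    (hFG : ∀ k, a ≤ k → F k = G k) : seg c F a = seg c G a :=
  seg_congr_fuel (c + 1) a (by omega) hFG

lemma mem_inl_seg_fuel {c : ℕ} {F : ℕ → Fin 2} :
    ∀ n a (i : Fin (c + 1)) (b : Fin 2), c + 1 ≤ a + n →
      (Sum.inl (i, b) ∈ seg c F a ↔ (a ≤ i.1 ∧ F i.1 = b)) := by
  intro n
  induction n with
  | zero =>
    intro a i b h
    rw [seg_nil F (by omega)]
    simp only [List.not_mem_nil, false_iff]
    rintro ⟨h1, h2⟩
    have := i.isLt
    omega
  | succ n IH =>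
    intro a i b h
    rcases Nat.lt_or_ge a (c + 1) with h' | h'
    · rcases Nat.lt_or_ge a c with hc | hc
      · have IH' := IH (a + 1) i b (by omega)
        by_cases hF : F (a + 1) = F a
        · rw [seg_stay F hc hF]
          simp only [List.mem_cons, IH', Sum.inl.injEq, Prod.mk.injEq]
          constructor
          · rintro (⟨h1, h2⟩ | ⟨h1, h2⟩)
            · subst h1 h2
              simp
            · exact ⟨by omega, h2⟩
          · rintro ⟨h1, h2⟩
            rcases Nat.eq_or_lt_of_le h1 with h1' | h1'
            · exact Or.inl ⟨Fin.ext h1'.symm, by rw [← h2, ← h1']⟩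
            · exact Or.inr ⟨by omega, h2⟩
        · rw [seg_move F hc hF]
          simp only [List.mem_cons, IH', Sum.inl.injEq, Prod.mk.injEq,
            reduceCtorEq, false_or]
          constructor
          · rintro (⟨h1, h2⟩ | ⟨h1, h2⟩)
            · subst h1 h2
              simp
            · exact ⟨by omega, h2⟩
          · rintro ⟨h1, h2⟩
            rcases Nat.eq_or_lt_of_le h1 with h1' | h1'
            · exact Or.inl ⟨Fin.ext h1'.symm, by rw [← h2, ← h1']⟩
            · exact Or.inr ⟨by omega, h2⟩
      · have : a = c := by omega
        subst this
        rw [seg_last]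
        have := i.isLt
        simp only [List.mem_singleton, Sum.inl.injEq, Prod.mk.injEq, Fin.ext_iff]
        constructor
        · rintro ⟨h1, h2⟩
          exact ⟨by omega, by rw [h1]; exact h2.symm⟩
        · rintro ⟨h1, h2⟩
          have hia : i.1 = a := by omega
          exact ⟨hia, by rw [← h2, hia]⟩
    · rw [seg_nil F h']
      simp only [List.not_mem_nil, false_iff]
      rintro ⟨h1, h2⟩
      have := i.isLt
      omega

lemma mem_inl_seg {c : ℕ} {F : ℕ → Fin 2} (a : ℕ) (i : Fin (c + 1)) (b : Fin 2) :
    Sum.inl (i, b) ∈ seg c F a ↔ (a ≤ i.1 ∧ F i.1 = b) :=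
  mem_inl_seg_fuel (c + 1) a i b (by omega)

lemma mem_inr_seg_fuel {c : ℕ} {F : ℕ → Fin 2} :
    ∀ n a (j : Fin c) (b : Fin 2), c + 1 ≤ a + n →
      (Sum.inr (j, b) ∈ seg c F a ↔
        (a ≤ j.1 ∧ F j.1 = b ∧ F (j.1 + 1) ≠ F j.1)) := by
  intro n
  induction n with
  | zero =>
    intro a j b h
    rw [seg_nil F (by omega)]
    simp only [List.not_mem_nil, false_iff]
    rintro ⟨h1, h2⟩
    have := j.isLt
    omega
  | succ n IH =>
    intro a j b h
    rcases Nat.lt_or_ge a (c + 1) with h' | h'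
    · rcases Nat.lt_or_ge a c with hc | hc
      · have IH' := IH (a + 1) j b (by omega)
        by_cases hF : F (a + 1) = F a
        · rw [seg_stay F hc hF]
          simp only [List.mem_cons, IH', reduceCtorEq, false_or]
          constructor
          · rintro ⟨h1, h2, h3⟩
            exact ⟨by omega, h2, h3⟩
          · rintro ⟨h1, h2, h3⟩
            rcases Nat.eq_or_lt_of_le h1 with h1' | h1'
            · exfalso
              rw [h1'] at hF
              exact h3 hF
            · exact ⟨by omega, h2, h3⟩
        · rw [seg_move F hc hF]
          simp only [List.mem_cons, IH', Sum.inr.injEq, Prod.mk.injEq,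
            reduceCtorEq, false_or]
          constructor
          · rintro (⟨h1, h2⟩ | ⟨h1, h2, h3⟩)
            · subst h1 h2
              simpa using hF
            · exact ⟨by omega, h2, h3⟩
          · rintro ⟨h1, h2, h3⟩
            rcases Nat.eq_or_lt_of_le h1 with h1' | h1'
            · exact Or.inl ⟨Fin.ext h1'.symm, by rw [← h2, ← h1']⟩
            · exact Or.inr ⟨by omega, h2, h3⟩
      · have : a = c := by omega
        subst this
        rw [seg_last]
        have := j.isLt
        simp only [List.mem_singleton, reduceCtorEq, false_iff]
        rintro ⟨h1, h2⟩
        omega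
    · rw [seg_nil F h']
      simp only [List.not_mem_nil, false_iff]
      rintro ⟨h1, h2⟩
      have := j.isLt
      omega

lemma mem_inr_seg {c : ℕ} {F : ℕ → Fin 2} (a : ℕ) (j : Fin c) (b : Fin 2) :
    Sum.inr (j, b) ∈ seg c F a ↔
      (a ≤ j.1 ∧ F j.1 = b ∧ F (j.1 + 1) ≠ F j.1) :=
  mem_inr_seg_fuel (c + 1) a j b (by omega)

/-- The chain relation of walks in `H_{c,2}`. -/
abbrev HRel (c : ℕ) (e f : HEdg c 2) : Prop := Hhd c 2 e = Htl c 2 f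

lemma seg_chain_fuel {c : ℕ} {F : ℕ → Fin 2} :
    ∀ n a, c + 1 ≤ a + n → List.Chain' (HRel c) (seg c F a) := by
  intro n
  induction n with
  | zero => intro a h; rw [seg_nil F (by omega)]; exact List.isChain_nil
  | succ n IH =>
    intro a h
    rcases Nat.lt_or_ge a (c + 1) with h' | h'
    · rcases Nat.lt_or_ge a c with hc | hc
      · have IH' := IH (a + 1) (by omega)
        obtain ⟨t, ht⟩ := seg_cons F (show a + 1 ≤ c by omega)
        by_cases hF : F (a + 1) = F a
        · unfold List.Chain'; rw [seg_stay F hc hF, ht, List.isChain_cons_cons]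
          refine ⟨?_, by rw [← ht]; exact IH'⟩
          simp [HRel, Hhd, Htl, Prod.ext_iff, Fin.ext_iff, hF]
        · unfold List.Chain'; rw [seg_move F hc hF, ht, List.isChain_cons_cons, List.isChain_cons_cons]
          refine ⟨?_, ?_, by rw [← ht]; exact IH'⟩
          · simp [HRel, Hhd, Htl, Prod.ext_iff, Fin.ext_iff]
          · simp only [HRel, Hhd, Htl, Prod.ext_iff, Fin.ext_iff]
            exact ⟨by simp, (fin2_eq_finNext_of_ne (Ne.symm hF)).symm ▸ rfl⟩
      · have : a = c := by omega
        subst this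
        rw [seg_last]
        exact List.isChain_singleton _
    · rw [seg_nil F h']; exact List.isChain_nil

lemma seg_chain {c : ℕ} (F : ℕ → Fin 2) (a : ℕ) :
    List.Chain' (HRel c) (seg c F a) :=
  seg_chain_fuel (c + 1) a (by omega)

lemma seg_getLast_fuel {c : ℕ} {F : ℕ → Fin 2} :
    ∀ n a, c + 1 ≤ a + n → a ≤ c →
      (seg c F a).getLast? = some (Sum.inl (⟨c, by omega⟩, F c)) := by
  intro n
  induction n with
  | zero => intro a h h'; omega
  | succ n IH =>
    intro a h h'
    rcases Nat.lt_or_ge a c with hc | hc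
    · have IH' := IH (a + 1) (by omega) (by omega)
      obtain ⟨t, ht⟩ := seg_cons F (show a + 1 ≤ c by omega)
      by_cases hF : F (a + 1) = F a
      · rw [seg_stay F hc hF, ht, List.getLast?_cons_cons, ← ht, IH']
      · rw [seg_move F hc hF, ht, List.getLast?_cons_cons,
          List.getLast?_cons_cons, ← ht, IH']
    · have : a = c := by omega
      subst this
      rw [seg_last]
      rfl

lemma seg_getLast {c : ℕ} (F : ℕ → Fin 2) {a : ℕ} (h : a ≤ c) :
    (seg c F a).getLast? = some (Sum.inl (⟨c, by omega⟩, F c)) :=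
  seg_getLast_fuel (c + 1) a (by omega) h

lemma isSource_of_level {c : ℕ} (v : HVtx c 2) (h : v.1.1 = 0) :
    IsSource (Htl c 2) (Hhd c 2) v := by
  rintro (⟨i, b⟩ | ⟨j, b⟩) he <;>
  · rw [← he] at h
    simp [Hhd] at h

lemma isSink_of_level {c : ℕ} (v : HVtx c 2) (h : v.1.1 = c + 1) :
    IsSink (Htl c 2) (Hhd c 2) v := by
  rintro (⟨i, b⟩ | ⟨j, b⟩) he <;>
  · rw [← he] at h
    simp [Htl] at h
    omega

lemma level_eq_of_isSink {c : ℕ} (v : HVtx c 2) 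
    (h : IsSink (Htl c 2) (Hhd c 2) v) : v.1.1 = c + 1 := by
  by_contra hne
  have hlt : v.1.1 < c + 1 := by have := v.1.isLt; omega
  exact h (Sum.inl (⟨v.1.1, hlt⟩, v.2)) (by simp [Htl, Prod.ext_iff, Fin.ext_iff])

lemma level_eq_of_isSource {c : ℕ} (v : HVtx c 2)
    (h : IsSource (Htl c 2) (Hhd c 2) v) : v.1.1 = 0 := by
  by_contra hne
  have hlt : v.1.1 - 1 < c + 1 := by have := v.1.isLt; omega
  exact h (Sum.inl (⟨v.1.1 - 1, hlt⟩, v.2))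
    (by simp [Hhd, Prod.ext_iff, Fin.ext_iff]; omega)

lemma seg_srcSnk {c : ℕ} (F : ℕ → Fin 2) :
    IsSrcSnkWalk (Htl c 2) (Hhd c 2) (seg c F 0) := by
  obtain ⟨t, ht⟩ := seg_cons F (show 0 ≤ c by omega)
  refine ⟨⟨seg_ne_nil F (by omega), seg_chain F 0⟩, ?_, ?_⟩
  · intro e he
    rw [ht] at he
    simp only [List.head?_cons, Option.mem_def, Option.some.injEq] at he
    subst he
    exact isSource_of_level _ (by simp [Htl])
  · intro e he
    rw [seg_getLast F (by omega)] at he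
    simp only [Option.mem_def, Option.some.injEq] at he
    subst he
    exact isSink_of_level _ (by simp [Hhd])

lemma lvl_le_getLast {c : ℕ} :
    ∀ (u : List (HEdg c 2)) (e g : HEdg c 2), List.Chain' (HRel c) (e :: u) →
      g ∈ (e :: u).getLast? →
      ((Htl c 2 e).1.1 ≤ (Hhd c 2 g).1.1 ∧
        ((∃ x ∈ e :: u, ∃ y, x = Sum.inl y) →
          (Htl c 2 e).1.1 < (Hhd c 2 g).1.1)) := by
  intro u
  induction u with
  | nil =>
    intro e g _ hg
    simp only [List.getLast?_singleton, Option.mem_def, Option.some.injEq] at hg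
    subst hg
    rcases e with ⟨i, b⟩ | ⟨j, b⟩
    · simp [Htl, Hhd]
    · simp only [Htl, Hhd, List.mem_singleton]
      refine ⟨le_rfl, ?_⟩
      rintro ⟨x, hx, y, hy⟩
      subst hx
      simp at hy
  | cons f t IH =>
    intro e g hch hg
    unfold List.Chain' at hch; rw [List.isChain_cons_cons] at hch
    obtain ⟨hef, hch⟩ := hch
    rw [List.getLast?_cons_cons] at hg
    have IH' := IH f g hch hg
    have h1 : (Htl c 2 e).1.1 ≤ (Hhd c 2 e).1.1 := by
      rcases e with ⟨i, b⟩ | ⟨j, b⟩ <;> simp [Htl, Hhd]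
    have h2 : (Hhd c 2 e).1.1 = (Htl c 2 f).1.1 := by rw [hef]
    constructor
    · omega
    · rintro ⟨x, hx, y, hy⟩
      rcases List.mem_cons.1 hx with hx | hx
      · subst hx hy
        have : (Htl c 2 (Sum.inl y)).1.1 < (Hhd c 2 (Sum.inl y)).1.1 := by
          rcases y with ⟨i, b⟩; simp [Htl, Hhd]
        omega
      · have := IH'.2 ⟨x, hx, y, hy⟩
        omega

lemma castSucc_succ_inj {c : ℕ} {j j' : Fin c}
    (h : Fin.castSucc (Fin.succ j) = Fin.castSucc (Fin.succ j')) : j = j' := by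
  rw [Fin.ext_iff] at h ⊢
  simpa using h

lemma minCycle_char {c : ℕ} {u : List (HEdg c 2)}
    (h : IsMinCycle (Htl c 2) (Hhd c 2) u) :
    ∃ (j : Fin c) (b : Fin 2),
      u = [Sum.inr (j, b), Sum.inr (j, finNext b)] := by
  obtain ⟨⟨hne, hch⟩, hclosed, hnd⟩ := h
  obtain ⟨e, t, rfl⟩ := List.exists_cons_of_ne_nil hne
  obtain ⟨g, hg⟩ : ∃ g, (e :: t).getLast? = some g := by
    rw [List.getLast?_eq_getLast (by simp)]
    exact ⟨_, rfl⟩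
  have hcl : Hhd c 2 g = Htl c 2 e := hclosed g hg e (by simp)
  have hlvl := lvl_le_getLast t e g hch hg
  -- no inl edge in the cycle
  have hred : ∀ x ∈ e :: t, ∃ j b, x = Sum.inr (j, b) := by
    intro x hx
    rcases x with ⟨i, b⟩ | ⟨j, b⟩
    · exfalso
      have := hlvl.2 ⟨_, hx, _, rfl⟩
      rw [hcl] at this
      omega
    · exact ⟨j, b, rfl⟩
  obtain ⟨j, b, rfl⟩ := hred e (by simp)
  rcases t with _ | ⟨f, t⟩
  · exfalso
    simp only [List.getLast?_singleton, Option.some.injEq] at hg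
    subst hg
    simp only [Hhd, Htl, Prod.ext_iff] at hcl
    exact finNext_ne b hcl.2
  obtain ⟨j₂, b₂, rfl⟩ := hred f (by simp)
  unfold List.Chain' at hch; rw [List.isChain_cons_cons] at hch
  have h1 := hch.1
  simp only [HRel, Hhd, Htl, Prod.mk.injEq] at h1
  have hj2 : j = j₂ := castSucc_succ_inj h1.1
  have hb2 : finNext b = b₂ := h1.2
  subst hj2 hb2
  rcases t with _ | ⟨x, t⟩
  · exact ⟨j, b, rfl⟩
  exfalso
  obtain ⟨j₃, b₃, rfl⟩ := hred x (by simp)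
  have h2 := (List.isChain_cons_cons.1 hch.2).1
  simp only [HRel, Hhd, Htl, Prod.mk.injEq] at h2
  have hj3 : j = j₃ := castSucc_succ_inj h2.1
  have hb3 : b = b₃ := by rw [← h2.2, finNext_finNext]
  subst hj3 hb3
  rw [List.map_cons, List.map_cons, List.map_cons, List.nodup_cons] at hnd
  exact hnd.1 (by simp)

lemma seg_chain_col_fuel {c : ℕ} {F : ℕ → Fin 2} :
    ∀ n a, c + 1 ≤ a + n →
      List.Chain' (fun e f => Hcol c 2 e = Col.blue ∨ Hcol c 2 f = Col.blue)
        (seg c F a) := by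
  intro n
  induction n with
  | zero => intro a h; rw [seg_nil F (by omega)]; exact List.isChain_nil
  | succ n IH =>
    intro a h
    rcases Nat.lt_or_ge a (c + 1) with h' | h'
    · rcases Nat.lt_or_ge a c with hc | hc
      · have IH' := IH (a + 1) (by omega)
        obtain ⟨t, ht⟩ := seg_cons F (show a + 1 ≤ c by omega)
        by_cases hF : F (a + 1) = F a
        · unfold List.Chain'; rw [seg_stay F hc hF, ht, List.isChain_cons_cons]
          exact ⟨Or.inl rfl, by rw [← ht]; exact IH'⟩
        · unfold List.Chain'; rw [seg_move F hc hF, ht, List.isChain_cons_cons, List.isChain_cons_cons]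
          exact ⟨Or.inl rfl, Or.inr rfl, by rw [← ht]; exact IH'⟩
      · have : a = c := by omega
        subst this
        rw [seg_last]
        exact List.isChain_singleton _
    · rw [seg_nil F h']; exact List.isChain_nil

lemma seg_good {c : ℕ} (F : ℕ → Fin 2) :
    IsGoodRoute (Htl c 2) (Hhd c 2) (seg c F 0) := by
  refine ⟨seg_srcSnk F, ?_⟩
  intro u hu hcyc
  obtain ⟨j, b, rfl⟩ := minCycle_char hcyc
  have := (seg_chain_col_fuel (c + 1) 0 (by omega)).infix hu
  rw [List.isChain_cons_cons] at this
  rcases this.1 with h | h <;> simp [Hcol] at h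

lemma two_red_cycle {c : ℕ} (j : Fin c) (b : Fin 2) :
    IsMinCycle (Htl c 2) (Hhd c 2) [Sum.inr (j, b), Sum.inr (j, finNext b)] := by
  refine ⟨⟨by simp, ?_⟩, ?_, ?_⟩
  · unfold List.Chain'; rw [List.isChain_cons_cons]
    exact ⟨rfl, List.isChain_singleton _⟩
  · intro e he f hf
    simp only [List.getLast?_cons_cons, List.getLast?_singleton,
      Option.mem_def, Option.some.injEq, List.head?_cons] at he hf
    subst he
    subst hf
    simp [Hhd, Htl, Prod.ext_iff, finNext_finNext]
  · refine List.nodup_cons.2 ⟨?_, List.nodup_singleton _⟩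
    simp only [List.map_cons, List.map_nil, List.mem_singleton, Hhd,
      Prod.mk.injEq, not_and]
    intro _ h
    rw [finNext_finNext] at h
    exact finNext_ne b h

lemma walk_struct {c : ℕ} :
    ∀ n (w : List (HEdg c 2)), w.length ≤ n → w ≠ [] →
      List.Chain' (HRel c) w →
      (∀ u, u <:+: w → ¬ IsMinCycle (Htl c 2) (Hhd c 2) u) →
      (∀ e ∈ w.getLast?, IsSink (Htl c 2) (Hhd c 2) (Hhd c 2 e)) →
      ∀ (a : ℕ) (b : Fin 2) (ha : a < c + 2),
        (∀ e ∈ w.head?, Htl c 2 e = (⟨a, ha⟩, b)) →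
        ∃ F : ℕ → Fin 2,
          (F a = b ∧ w = seg c F a) ∨
          (1 ≤ a ∧ a ≤ c ∧ F a = finNext b ∧
            ∃ (h : a - 1 < c), w = Sum.inr (⟨a - 1, h⟩, b) :: seg c F a) := by
  intro n
  induction n with
  | zero =>
    intro w hlen hne
    interval_cases h : w.length
    · exact absurd (List.length_eq_zero_iff.1 h) hne
  | succ n IH =>
    intro w hlen hne hch hgood hsnk a b ha hhead
    obtain ⟨e, rest, rfl⟩ := List.exists_cons_of_ne_nil hne
    have hve : Htl c 2 e = (⟨a, ha⟩, b) := hhead e rfl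
    rcases e with ⟨⟨i, b₀⟩⟩ | ⟨⟨j, b₀⟩⟩
    · -- blue edge
      simp only [Htl, Prod.mk.injEq, Fin.ext_iff, Fin.coe_castSucc] at hve
      have hia : i.1 = a := hve.1
      have hb : b = b₀ := (Fin.ext hve.2).symm
      subst hb
      have hac : a < c + 1 := hia ▸ i.isLt
      rcases rest with _ | ⟨r, t⟩
      · -- single edge: must reach the sink
        have hsink := hsnk _ rfl
        have := level_eq_of_isSink _ hsink
        simp only [Hhd] at this
        have hac' : a = c := by simp [Fin.val_succ] at this; omega
        refine ⟨fun _ => b, Or.inl ⟨rfl, ?_⟩⟩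
        subst hac'
        rw [seg_last]
        simp [Fin.ext_iff, hia]
      · -- continue from level a+1
        have hch' := List.isChain_cons_cons.1 hch
        have hr : Htl c 2 r = (⟨a + 1, by omega⟩, b) := by
          rw [← hch'.1]
          simp [Hhd, Prod.ext_iff, Fin.ext_iff, hia]
        obtain ⟨F, hF⟩ := IH (r :: t) (by simpa using Nat.lt_succ_iff.1 hlen)
          (by simp) hch'.2
          (fun u hu => hgood u (hu.trans (List.infix_cons (List.infix_refl _))))
          (by rw [← List.getLast?_cons_cons (l := t) (a := Sum.inl (i, b))]
              exact hsnk)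
          (a + 1) b (by omega) (fun e' he' => by cases he'; exact hr)
        rcases hF with ⟨hFa, hrest⟩ | ⟨_, hac2, hFa, h', hrest⟩
        · -- rest is seg from a+1, no switch
          have hne1 : a + 1 ≤ c := by
            by_contra hcon
            rw [seg_nil F (by omega)] at hrest
            simp at hrest
          refine ⟨Function.update F a b, Or.inl ⟨by simp, ?_⟩⟩
          rw [seg_stay (Function.update F a b) (by omega)
            (by rw [Function.update_of_ne (by omega), Function.update_self, hFa]),
            hrest]
          congr 1
          · simp [Fin.ext_iff, hia, Function.update_self]
          · exact (seg_congr (F := Function.update F a b) (G := F) (a + 1)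
              (fun k hk => Function.update_of_ne (by omega) _ _)).symm
        · -- rest starts with a red edge at row a+1
          have hne1 : a + 1 ≤ c := hac2
          refine ⟨Function.update F a b, Or.inl ⟨by simp, ?_⟩⟩
          rw [seg_move (Function.update F a b) (by omega)
            (by rw [Function.update_of_ne (by omega), Function.update_self, hFa]
                exact finNext_ne b),
            hrest]
          congr 1
          · simp [Fin.ext_iff, hia, Function.update_self]
          congr 1
          · simp [Fin.ext_iff, Function.update_self]
          · exact (seg_congr (F := Function.update F a b) (G := F) (a + 1)
              (fun k hk => Function.update_of_ne (by omega) _ _)).symm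
    · -- red edge
      simp only [Htl, Prod.mk.injEq, Fin.ext_iff, Fin.coe_castSucc, Fin.val_succ] at hve
      have hja : j.1 + 1 = a := hve.1
      have hb : b = b₀ := (Fin.ext hve.2).symm
      subst hb
      have hac : 1 ≤ a ∧ a ≤ c := by have := j.isLt; omega
      rcases rest with _ | ⟨r, t⟩
      · exfalso
        have hsink := hsnk _ rfl
        have := level_eq_of_isSink _ hsink
        simp only [Hhd] at this
        simp [Fin.val_succ] at this
        omega
      · have hch' := List.isChain_cons_cons.1 hch
        have hr : Htl c 2 r = (⟨a, ha⟩, finNext b) := by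
          rw [← hch'.1]
          simp [Hhd, Prod.ext_iff, Fin.ext_iff, hja]
        obtain ⟨F, hF⟩ := IH (r :: t) (by simpa using Nat.lt_succ_iff.1 hlen)
          (by simp) hch'.2
          (fun u hu => hgood u (hu.trans (List.infix_cons (List.infix_refl _))))
          (by rw [← List.getLast?_cons_cons (l := t) (a := Sum.inr (j, b))]
              exact hsnk)
          a (finNext b) ha (fun e' he' => by cases he'; exact hr)
        rcases hF with ⟨hFa, hrest⟩ | ⟨_, _, hFa, h', hrest⟩
        · -- rest is seg from a: we get the "red start" form
          refine ⟨F, Or.inr ⟨hac.1, hac.2, hFa, by omega, ?_⟩⟩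
          rw [hrest]
          congr 2
          simp [Fin.ext_iff]
          omega
        · -- two consecutive red edges: minimal cycle, contradiction
          exfalso
          have h2 : r = Sum.inr (⟨a - 1, h'⟩, finNext b) := by
            have := hrest
            rw [List.cons.injEq] at this
            exact this.1
          have hj' : (⟨a - 1, h'⟩ : Fin c) = j := by
            simp [Fin.ext_iff]; omega
          apply hgood [Sum.inr (j, b), Sum.inr (j, finNext b)]
          · refine ⟨[], seg c F a, ?_⟩
            rw [hrest, hj']
            simp
          · exact two_red_cycle j b

lemma goodRoute_eq_seg {c : ℕ} {w : List (HEdg c 2)}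
    (h : IsGoodRoute (Htl c 2) (Hhd c 2) w) : ∃ F, w = seg c F 0 := by
  obtain ⟨⟨⟨hne, hch⟩, hsrc, hsnk⟩, hgood⟩ := h
  obtain ⟨e, t, rfl⟩ := List.exists_cons_of_ne_nil hne
  have hsrc' := hsrc e rfl
  have hlvl := level_eq_of_isSource _ hsrc'
  obtain ⟨F, hF⟩ := walk_struct (e :: t).length (e :: t) le_rfl (by simp) hch
    (fun u hu => hgood u hu) hsnk 0 (Htl c 2 e).2 (by omega)
    (fun e' he' => by
      cases he'
      exact Prod.ext (Fin.ext (by simpa using hlvl)) rfl)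
  rcases hF with ⟨_, hw⟩ | ⟨h1, _⟩
  · exact ⟨F, hw⟩
  · omega

lemma suffix_struct_fuel {c : ℕ} {F : ℕ → Fin 2} :
    ∀ n a (Z : List (HEdg c 2)), c + 1 ≤ a + n → Z <:+ seg c F a →
      Z = [] ∨ (∃ a', a ≤ a' ∧ a' ≤ c ∧ Z = seg c F a') ∨
      (∃ (a' : ℕ) (h : a' < c), a ≤ a' ∧ F (a' + 1) ≠ F a' ∧
        Z = Sum.inr (⟨a', h⟩, F a') :: seg c F (a' + 1)) := by
  intro n
  induction n with
  | zero =>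
    intro a Z h hZ
    rw [seg_nil F (by omega)] at hZ
    exact Or.inl (List.eq_nil_of_suffix_nil hZ)
  | succ n IH =>
    intro a Z h hZ
    rcases Nat.lt_or_ge a (c + 1) with h' | h'
    · rcases Nat.lt_or_ge a c with hc | hc
      · by_cases hF : F (a + 1) = F a
        · rw [seg_stay F hc hF] at hZ
          rcases List.suffix_cons_iff.1 hZ with hZ' | hZ'
          · exact Or.inr (Or.inl ⟨a, le_rfl, by omega,
              by rw [hZ', seg_stay F hc hF]⟩)
          · rcases IH (a + 1) Z (by omega) hZ' with h1 | h1 | h1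
            · exact Or.inl h1
            · obtain ⟨a', ha1, ha2, ha3⟩ := h1
              exact Or.inr (Or.inl ⟨a', by omega, ha2, ha3⟩)
            · obtain ⟨a', hlt, ha1, ha2, ha3⟩ := h1
              exact Or.inr (Or.inr ⟨a', hlt, by omega, ha2, ha3⟩)
        · rw [seg_move F hc hF] at hZ
          rcases List.suffix_cons_iff.1 hZ with hZ' | hZ'
          · exact Or.inr (Or.inl ⟨a, le_rfl, by omega,
              by rw [hZ', seg_move F hc hF]⟩)
          rcases List.suffix_cons_iff.1 hZ' with hZ'' | hZ''
          · exact Or.inr (Or.inr ⟨a, hc, le_rfl, hF, hZ''⟩)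
          · rcases IH (a + 1) Z (by omega) hZ'' with h1 | h1 | h1
            · exact Or.inl h1
            · obtain ⟨a', ha1, ha2, ha3⟩ := h1
              exact Or.inr (Or.inl ⟨a', by omega, ha2, ha3⟩)
            · obtain ⟨a', hlt, ha1, ha2, ha3⟩ := h1
              exact Or.inr (Or.inr ⟨a', hlt, by omega, ha2, ha3⟩)
      · have hca : c = a := by omega
        subst hca
        rw [seg_last] at hZ
        rcases List.suffix_cons_iff.1 hZ with hZ' | hZ'
        · exact Or.inr (Or.inl ⟨c, le_rfl, le_rfl, by rw [hZ', seg_last]⟩)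
        · exact Or.inl (List.eq_nil_of_suffix_nil hZ')
    · rw [seg_nil F (by omega)] at hZ
      exact Or.inl (List.eq_nil_of_suffix_nil hZ)

lemma suffix_struct {c : ℕ} {F : ℕ → Fin 2} {a : ℕ} {Z : List (HEdg c 2)}
    (hZ : Z <:+ seg c F a) :
    Z = [] ∨ (∃ a', a ≤ a' ∧ a' ≤ c ∧ Z = seg c F a') ∨
      (∃ (a' : ℕ) (h : a' < c), a ≤ a' ∧ F (a' + 1) ≠ F a' ∧
        Z = Sum.inr (⟨a', h⟩, F a') :: seg c F (a' + 1)) :=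
  suffix_struct_fuel (c + 1) a Z (by omega) hZ

/-- The middle-of-crossing analysis: `w` continues red after the common part
while `w'` continues blue. -/
lemma mid_struct {c : ℕ} {F G : ℕ → Fin 2} :
    ∀ n a (S Q Q' : List (HEdg c 2)) (q q' : HEdg c 2),
      c + 1 ≤ a + n →
      Hcol c 2 q = Col.red → Hcol c 2 q' = Col.blue →
      S ++ q :: Q = seg c F a → S ++ q' :: Q' = seg c G a →
      ∃ j', a ≤ j' ∧ j' < c ∧ (∀ k, a ≤ k → k ≤ j' → F k = G k) ∧
        F (j' + 1) ≠ F j' ∧ G (j' + 1) = G j' := by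
  intro n
  induction n with
  | zero =>
    intro a S Q Q' q q' h hq hq' hSF hSG
    rw [seg_nil F (by omega)] at hSF
    simp at hSF
  | succ n IH =>
    intro a S Q Q' q q' h hq hq' hSF hSG
    have hac : a ≤ c := by
      by_contra hcon
      rw [seg_nil F (by omega)] at hSF
      simp at hSF
    obtain ⟨tF, htF⟩ := seg_cons F hac
    obtain ⟨tG, htG⟩ := seg_cons G hac
    rcases S with _ | ⟨e, S₂⟩
    · -- S empty: q would be the blue head of seg F a
      rw [List.nil_append, htF] at hSF
      have : q = Sum.inl (⟨a, by omega⟩, F a) := (List.cons_eq_cons.1 hSF).1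
      rw [this] at hq
      simp [Hcol] at hq
    · rw [List.cons_append, htF] at hSF
      rw [List.cons_append, htG] at hSG
      have heF := (List.cons_eq_cons.1 hSF).1
      have heG := (List.cons_eq_cons.1 hSG).1
      have hFG : F a = G a := by
        rw [heF] at heG
        simpa using heG
      have htF' : S₂ ++ q :: Q = tF := (List.cons_eq_cons.1 hSF).2
      have htG' : S₂ ++ q' :: Q' = tG := (List.cons_eq_cons.1 hSG).2
      have hacc : a < c := by
        by_contra hcon
        have hca : c = a := by omega
        subst hca
        rw [seg_last] at htF
        injection htF with h1 h2
        rw [← h2] at htF'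
        simp at htF'
      by_cases hFs : F (a + 1) = F a <;> by_cases hGs : G (a + 1) = G a
      · -- both stay: recurse
        have htF2 : tF = seg c F (a + 1) := by
          have := seg_stay F hacc hFs
          rw [htF] at this
          exact (List.cons_eq_cons.1 this).2
        have htG2 : tG = seg c G (a + 1) := by
          have := seg_stay G hacc hGs
          rw [htG] at this
          exact (List.cons_eq_cons.1 this).2
        obtain ⟨j', h1, h2, h3, h4, h5⟩ := IH (a + 1) S₂ Q Q' q q' (by omega)
          hq hq' (htF2 ▸ htF') (htG2 ▸ htG')
        refine ⟨j', by omega, h2, ?_, h4, h5⟩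
        intro k hk1 hk2
        rcases Nat.eq_or_lt_of_le hk1 with hk | hk
        · rw [← hk]; exact hFG
        · exact h3 k (by omega) hk2
      · -- F stays, G moves: impossible
        exfalso
        have htF2 : tF = seg c F (a + 1) := by
          have := seg_stay F hacc hFs
          rw [htF] at this
          exact (List.cons_eq_cons.1 this).2
        have htG2 : tG = Sum.inr (⟨a, hacc⟩, G a) :: seg c G (a + 1) := by
          have := seg_move G hacc hGs
          rw [htG] at this
          exact (List.cons_eq_cons.1 this).2
        obtain ⟨tF1, htF1⟩ := seg_cons F (show a + 1 ≤ c by omega)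
        rcases S₂ with _ | ⟨e₂, S₃⟩
        · -- q' = red head, contradiction with q' blue
          rw [List.nil_append, htG2] at htG'
          have : q' = Sum.inr (⟨a, hacc⟩, G a) := (List.cons_eq_cons.1 htG').1
          rw [this] at hq'
          simp [Hcol] at hq'
        · -- head of S₂ both inl and inr
          rw [List.cons_append, htG2] at htG'
          rw [List.cons_append, htF2, htF1] at htF'
          have h1 : e₂ = Sum.inl (⟨a + 1, by omega⟩, F (a + 1)) :=
            (List.cons_eq_cons.1 htF').1
          have h2 : e₂ = Sum.inr (⟨a, hacc⟩, G a) :=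
            (List.cons_eq_cons.1 htG').1
          rw [h1] at h2
          exact absurd h2 (by simp)
      · -- F moves, G stays
        have htF2 : tF = Sum.inr (⟨a, hacc⟩, F a) :: seg c F (a + 1) := by
          have := seg_move F hacc hFs
          rw [htF] at this
          exact (List.cons_eq_cons.1 this).2
        have htG2 : tG = seg c G (a + 1) := by
          have := seg_stay G hacc hGs
          rw [htG] at this
          exact (List.cons_eq_cons.1 this).2
        rcases S₂ with _ | ⟨e₂, S₃⟩
        · -- found the crossing end
          exact ⟨a, le_rfl, hacc, fun k hk1 hk2 => by
            have : k = a := by omega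
            rw [this]; exact hFG, hFs, hGs⟩
        · -- head of S₂ both inr and inl: impossible
          exfalso
          obtain ⟨tG1, htG1⟩ := seg_cons G (show a + 1 ≤ c by omega)
          rw [List.cons_append, htF2] at htF'
          rw [List.cons_append, htG2, htG1] at htG'
          have h1 : e₂ = Sum.inr (⟨a, hacc⟩, F a) :=
            (List.cons_eq_cons.1 htF').1
          have h2 : e₂ = Sum.inl (⟨a + 1, by omega⟩, G (a + 1)) :=
            (List.cons_eq_cons.1 htG').1
          rw [h1] at h2
          exact absurd h2 (by simp)
      · -- both move: recurse after the common red edge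
        have htF2 : tF = Sum.inr (⟨a, hacc⟩, F a) :: seg c F (a + 1) := by
          have := seg_move F hacc hFs
          rw [htF] at this
          exact (List.cons_eq_cons.1 this).2
        have htG2 : tG = Sum.inr (⟨a, hacc⟩, G a) :: seg c G (a + 1) := by
          have := seg_move G hacc hGs
          rw [htG] at this
          exact (List.cons_eq_cons.1 this).2
        rcases S₂ with _ | ⟨e₂, S₃⟩
        · -- q' would be red
          exfalso
          rw [List.nil_append, htG2] at htG'
          have : q' = Sum.inr (⟨a, hacc⟩, G a) := (List.cons_eq_cons.1 htG').1
          rw [this] at hq'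
          simp [Hcol] at hq'
        · rw [List.cons_append, htF2] at htF'
          rw [List.cons_append, htG2] at htG'
          obtain ⟨j', h1, h2, h3, h4, h5⟩ := IH (a + 1) S₃ Q Q' q q' (by omega)
            hq hq' (List.cons_eq_cons.1 htF').2
            (List.cons_eq_cons.1 htG').2
          refine ⟨j', by omega, h2, ?_, h4, h5⟩
          intro k hk1 hk2
          rcases Nat.eq_or_lt_of_le hk1 with hk | hk
          · rw [← hk]; exact hFG
          · exact h3 k (by omega) hk2

/-- Crossing of two column functions. -/
def Cross (c : ℕ) (F G : ℕ → Fin 2) : Prop :=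
  ∃ j j' : ℕ, j ≤ j' ∧ j' < c ∧ F j ≠ G j ∧
    (∀ k, j < k → k ≤ j' → F k = G k) ∧ F (j' + 1) ≠ G (j' + 1) ∧
    ((G j ≠ G (j + 1) ∧ F j' ≠ F (j' + 1)) ∨
     (F j ≠ F (j + 1) ∧ G j' ≠ G (j' + 1)))

lemma cross_symm {c : ℕ} {F G : ℕ → Fin 2} (h : Cross c F G) : Cross c G F := by
  obtain ⟨j, j', h1, h2, h3, h4, h5, h6⟩ := h
  exact ⟨j, j', h1, h2, Ne.symm h3,
    fun k hk1 hk2 => (h4 k hk1 hk2).symm, Ne.symm h5, h6.symm⟩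

lemma seg_step {c : ℕ} (F : ℕ → Fin 2) (a : ℕ) :
    ∃ M, seg c F a = M ++ seg c F (a + 1) := by
  rcases Nat.lt_or_ge a c with hc | hc
  · by_cases hF : F (a + 1) = F a
    · exact ⟨[Sum.inl (⟨a, by omega⟩, F a)], by rw [seg_stay F hc hF]; rfl⟩
    · exact ⟨[Sum.inl (⟨a, by omega⟩, F a), Sum.inr (⟨a, hc⟩, F a)],
        by rw [seg_move F hc hF]; rfl⟩
  · rcases Nat.eq_or_lt_of_le hc with hc' | hc'
    · exact ⟨seg c F a,
        by rw [show seg c F (a + 1) = [] from seg_nil F (by omega),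
          List.append_nil]⟩
    · exact ⟨[], by rw [show seg c F a = [] from seg_nil F (by omega),
        show seg c F (a + 1) = [] from seg_nil F (by omega)]; rfl⟩

lemma seg_prefix_decomp {c : ℕ} (F : ℕ → Fin 2) {a a' : ℕ} (h : a ≤ a') :
    ∃ M, seg c F a = M ++ seg c F a' := by
  induction a' with
  | zero =>
    have : a = 0 := by omega
    subst this
    exact ⟨[], rfl⟩
  | succ a' IH =>
    rcases Nat.lt_or_ge a (a' + 1) with h' | h'
    · obtain ⟨M, hM⟩ := IH (by omega)
      obtain ⟨M', hM'⟩ := seg_step F a'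
      exact ⟨M ++ M', by rw [hM, hM', List.append_assoc]⟩
    · have : a = a' + 1 := by omega
      subst this
      exact ⟨[], rfl⟩

lemma seg_congr_mid_fuel {c : ℕ} {F G : ℕ → Fin 2} :
    ∀ n a a', c + 1 ≤ a + n → a ≤ a' →
      (∀ k, a ≤ k → k ≤ a' → F k = G k) →
      ∃ M, seg c F a = M ++ seg c F a' ∧ seg c G a = M ++ seg c G a' := by
  intro n
  induction n with
  | zero =>
    intro a a' h ha hFG
    exact ⟨[], by rw [seg_nil F (by omega), seg_nil F (by omega)]; rfl,
      by rw [seg_nil G (by omega), seg_nil G (by omega)]; rfl⟩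
  | succ n IH =>
    intro a a' h ha hFG
    rcases Nat.eq_or_lt_of_le ha with rfl | ha'
    · exact ⟨[], rfl, rfl⟩
    rcases Nat.lt_or_ge a (c + 1) with h' | h'
    · have hFGa : F a = G a := hFG a le_rfl (by omega)
      rcases Nat.lt_or_ge a c with hc | hc
      · have hFGa1 : F (a + 1) = G (a + 1) := hFG (a + 1) (by omega) (by omega)
        obtain ⟨M, hMF, hMG⟩ := IH (a + 1) a' (by omega) (by omega)
          (fun k hk1 hk2 => hFG k (by omega) hk2)
        by_cases hF : F (a + 1) = F a
        · refine ⟨Sum.inl (⟨a, by omega⟩, F a) :: M, ?_, ?_⟩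
          · rw [seg_stay F hc hF, hMF]; rfl
          · rw [seg_stay G hc (by rw [← hFGa1, ← hFGa]; exact hF), hMG, hFGa]
            rfl
        · refine ⟨Sum.inl (⟨a, by omega⟩, F a) ::
            Sum.inr (⟨a, hc⟩, F a) :: M, ?_, ?_⟩
          · rw [seg_move F hc hF, hMF]; rfl
          · rw [seg_move G hc (by rw [← hFGa1, ← hFGa]; exact hF), hMG, hFGa]
            rfl
      · -- a = c, a' ≥ c + 1
        have hca : a = c := by omega
        refine ⟨seg c F a, ?_, ?_⟩
        · rw [show seg c F a' = [] from seg_nil F (by omega), List.append_nil]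
        · rw [show seg c G a' = [] from seg_nil G (by omega), List.append_nil,
            hca, seg_last, seg_last]
          rw [hca] at hFGa
          rw [hFGa]
    · exact ⟨[], by rw [seg_nil F (by omega), seg_nil F (by omega)]; rfl,
        by rw [seg_nil G (by omega), seg_nil G (by omega)]; rfl⟩

lemma seg_congr_mid {c : ℕ} {F G : ℕ → Fin 2} {a a' : ℕ} (ha : a ≤ a')
    (hFG : ∀ k, a ≤ k → k ≤ a' → F k = G k) :
    ∃ M, seg c F a = M ++ seg c F a' ∧ seg c G a = M ++ seg c G a' :=
  seg_congr_mid_fuel (c + 1) a a' (by omega) ha hFG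

/-- From a one-sided incompatibility decomposition to a crossing. -/
lemma cross_of_decomp {c : ℕ} {F G : ℕ → Fin 2}
    {P S Q P' Q' : List (HEdg c 2)} {p q p' q' : HEdg c 2}
    (hw : seg c F 0 = P ++ p :: (S ++ q :: Q))
    (hw' : seg c G 0 = P' ++ p' :: (S ++ q' :: Q'))
    (hpp' : Hhd c 2 p = Hhd c 2 p')
    (hp : Hcol c 2 p = Col.blue) (hq' : Hcol c 2 q' = Col.blue)
    (hq : Hcol c 2 q = Col.red) (hp' : Hcol c 2 p' = Col.red) :
    Cross c F G := by
  -- analyse the suffix p :: (S ++ q :: Q) of seg F 0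
  have hsufF : p :: (S ++ q :: Q) <:+ seg c F 0 := ⟨P, hw.symm⟩
  have hsufG : p' :: (S ++ q' :: Q') <:+ seg c G 0 := ⟨P', hw'.symm⟩
  rcases suffix_struct hsufF with hF0 | hF0 | hF0
  · simp at hF0
  swap
  · -- p would be red
    obtain ⟨a', hlt, _, _, hZ⟩ := hF0
    have := (List.cons_eq_cons.1 hZ).1
    rw [this] at hp
    simp [Hcol] at hp
  obtain ⟨i, _, hic, hZF⟩ := hF0
  rcases suffix_struct hsufG with hG0 | hG0 | hG0
  · simp at hG0
  · -- p' would be blue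
    obtain ⟨a', _, ha'c, hZ⟩ := hG0
    obtain ⟨t, ht⟩ := seg_cons G ha'c
    rw [ht] at hZ
    have := (List.cons_eq_cons.1 hZ).1
    rw [this] at hp'
    simp [Hcol] at hp'
  obtain ⟨jj, hjlt, _, hGsw, hZG⟩ := hG0
  -- unpack the two suffix equations
  obtain ⟨tF, htF⟩ := seg_cons F hic
  rw [htF] at hZF
  have hpF : p = Sum.inl (⟨i, by omega⟩, F i) := (List.cons_eq_cons.1 hZF).1
  have hSF : S ++ q :: Q = tF := (List.cons_eq_cons.1 hZF).2
  have hpG : p' = Sum.inr (⟨jj, hjlt⟩, G jj) := (List.cons_eq_cons.1 hZG).1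
  have hSG : S ++ q' :: Q' = seg c G (jj + 1) := (List.cons_eq_cons.1 hZG).2
  -- the common vertex forces i = jj and F i = G (jj+1) = finNext (G jj)
  rw [hpF, hpG] at hpp'
  simp only [Hhd, Prod.mk.injEq, Fin.ext_iff, Fin.val_succ,
    Fin.coe_castSucc] at hpp'
  have hij : i = jj := by omega
  subst hij
  have hFGnext : F i = finNext (G i) := Fin.ext hpp'.2
  have hFGi : F i ≠ G i := by
    rw [hFGnext]
    exact finNext_ne (G i)
  have hGi1 : G (i + 1) = finNext (G i) :=
    (fin2_eq_finNext_of_ne (Ne.symm hGsw)).symm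
  -- now split on whether F switches at row i+1
  have hicc : i < c := by
    by_contra hcon
    have hci : c = i := by omega
    subst hci
    rw [seg_last] at htF
    have := (List.cons_eq_cons.1 htF).2
    rw [← this] at hSF
    simp at hSF
  by_cases hFs : F (i + 1) = F i
  · -- no switch: S ++ q :: Q = seg F (i+1), use mid_struct
    have htF2 : tF = seg c F (i + 1) := by
      have := seg_stay F hicc hFs
      rw [htF] at this
      exact (List.cons_eq_cons.1 this).2
    obtain ⟨j', h1, h2, h3, h4, h5⟩ := mid_struct (c + 1) (i + 1) S Q Q' q q'
      (by omega) hq hq' (htF2 ▸ hSF) hSG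
    have hFj' : F j' = G j' := h3 j' (by omega) le_rfl
    refine ⟨i, j', by omega, h2, hFGi, fun k hk1 hk2 => h3 k (by omega) hk2,
      ?_, Or.inl ⟨Ne.symm hGsw, Ne.symm h4⟩⟩
    rw [h5, ← hFj']
    exact h4
  · -- switch: S must be empty (else its head is both red and blue)
    have htF2 : tF = Sum.inr (⟨i, hicc⟩, F i) :: seg c F (i + 1) := by
      have := seg_move F hicc hFs
      rw [htF] at this
      exact (List.cons_eq_cons.1 this).2
    rcases S with _ | ⟨e, S₂⟩
    · refine ⟨i, i, le_rfl, hicc, hFGi, fun k hk1 hk2 => by omega, ?_,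
        Or.inl ⟨Ne.symm hGsw, Ne.symm hFs⟩⟩
      rw [hGi1, ← hFGnext]
      exact hFs
    · exfalso
      rw [htF2] at hSF
      have h1 : e = Sum.inr (⟨i, hicc⟩, F i) := by
        rw [List.cons_append] at hSF
        exact (List.cons_eq_cons.1 hSF).1
      obtain ⟨tG, htG⟩ := seg_cons G (show i + 1 ≤ c by omega)
      rw [htG, List.cons_append] at hSG
      have h2 : e = Sum.inl (⟨i + 1, by omega⟩, G (i + 1)) :=
        (List.cons_eq_cons.1 hSG).1
      rw [h1] at h2
      simp at h2

/-- From a crossing (in the first orientation) to a decomposition. -/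
lemma decomp_of_cross₁ {c : ℕ} (F G : ℕ → Fin 2) (j j' : ℕ)
    (h1 : j ≤ j') (h2 : j' < c) (h3 : F j ≠ G j)
    (h4 : ∀ k, j < k → k ≤ j' → F k = G k)
    (h5 : F (j' + 1) ≠ G (j' + 1))
    (h6 : G j ≠ G (j + 1)) (h7 : F j' ≠ F (j' + 1)) :
    ∃ (P S Q P' Q' : List (HEdg c 2)) (p q p' q' : HEdg c 2),
      seg c F 0 = P ++ p :: (S ++ q :: Q) ∧
      seg c G 0 = P' ++ p' :: (S ++ q' :: Q') ∧
      Hhd c 2 p = Hhd c 2 p' ∧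
      Hcol c 2 p = Col.blue ∧ Hcol c 2 q' = Col.blue ∧
      Hcol c 2 q = Col.red ∧ Hcol c 2 p' = Col.red := by
  have hjc : j < c := by omega
  have hGj1 : G (j + 1) = finNext (G j) := (fin2_eq_finNext_of_ne h6).symm
  have hFGj : finNext (G j) = F j := fin2_eq_finNext_of_ne (Ne.symm h3)
  obtain ⟨P0, hP0⟩ := seg_prefix_decomp (c := c) F (Nat.zero_le j)
  obtain ⟨P0', hP0'⟩ := seg_prefix_decomp (c := c) G (Nat.zero_le j)
  have hhd : Hhd c 2 (Sum.inl (⟨j, by omega⟩, F j) : HEdg c 2) =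
      Hhd c 2 (Sum.inr (⟨j, hjc⟩, G j) : HEdg c 2) := by
    simp only [Hhd, Prod.mk.injEq, Fin.ext_iff, Fin.val_succ, Fin.coe_castSucc]
    exact ⟨trivial, by rw [hFGj]⟩
  obtain ⟨tG, htG⟩ := seg_cons G (show j' + 1 ≤ c by omega)
  rcases Nat.eq_or_lt_of_le h1 with rfl | hjj'
  · -- j = j' : both switch at row j+1
    have hFmove := seg_move F hjc (Ne.symm h7)
    have hGmove := seg_move G hjc (Ne.symm h6)
    refine ⟨P0, [], seg c F (j + 1), P0' ++ [Sum.inl (⟨j, by omega⟩, G j)], tG,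
      Sum.inl (⟨j, by omega⟩, F j), Sum.inr (⟨j, hjc⟩, F j),
      Sum.inr (⟨j, hjc⟩, G j), Sum.inl (⟨j + 1, by omega⟩, G (j + 1)),
      ?_, ?_, hhd, rfl, rfl, rfl, rfl⟩
    · rw [hP0, hFmove]
      rfl
    · rw [hP0', hGmove, htG]
      simp
  · -- j < j'
    have hFstay : F (j + 1) = F j := by
      rw [h4 (j + 1) (by omega) (by omega), hGj1, hFGj]
    have hFGj' : F j' = G j' := h4 j' (by omega) le_rfl
    have hFj'1 : F (j' + 1) = finNext (F j') :=
      (fin2_eq_finNext_of_ne h7).symm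
    have hGstay : G (j' + 1) = G j' := by
      rw [← hFGj']
      refine fin2_eq_of_ne_finNext ?_
      rw [← hFj'1]
      exact Ne.symm h5
    obtain ⟨M, hMF, hMG⟩ := seg_congr_mid (F := F) (G := G) (c := c)
      (show j + 1 ≤ j' by omega) (fun k hk1 hk2 => h4 k (by omega) hk2)
    have hFj : seg c F j = Sum.inl (⟨j, by omega⟩, F j) :: seg c F (j + 1) :=
      seg_stay F hjc hFstay
    have hGj : seg c G j = Sum.inl (⟨j, by omega⟩, G j) ::
        Sum.inr (⟨j, hjc⟩, G j) :: seg c G (j + 1) :=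
      seg_move G hjc (Ne.symm h6)
    have hFj' : seg c F j' = Sum.inl (⟨j', by omega⟩, F j') ::
        Sum.inr (⟨j', h2⟩, F j') :: seg c F (j' + 1) :=
      seg_move F h2 (Ne.symm h7)
    have hGj' : seg c G j' = Sum.inl (⟨j', by omega⟩, G j') :: seg c G (j' + 1) :=
      seg_stay G h2 hGstay
    refine ⟨P0, M ++ [Sum.inl (⟨j', by omega⟩, F j')], seg c F (j' + 1),
      P0' ++ [Sum.inl (⟨j, by omega⟩, G j)], tG,
      Sum.inl (⟨j, by omega⟩, F j), Sum.inr (⟨j', h2⟩, F j'),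
      Sum.inr (⟨j, hjc⟩, G j), Sum.inl (⟨j' + 1, by omega⟩, G (j' + 1)),
      ?_, ?_, hhd, rfl, rfl, rfl, rfl⟩
    · rw [hP0, hFj, hMF, hFj']
      simp
    · rw [hP0', hGj, hMG, hGj', htG, hFGj']
      simp

lemma incompat_iff_cross {c : ℕ} (F G : ℕ → Fin 2) :
    Incompat (Htl c 2) (Hhd c 2) (Hcol c 2) (seg c F 0) (seg c G 0) ↔
      Cross c F G := by
  constructor
  · rintro ⟨-, -, P, S, Q, P', Q', p, q, p', q', hor, hpp', hp, hq', hq, hp'⟩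
    rcases hor with ⟨hA, hB⟩ | ⟨hA, hB⟩
    · exact cross_of_decomp hA hB hpp' hp hq' hq hp'
    · exact cross_symm (cross_of_decomp hA hB hpp' hp hq' hq hp')
  · rintro ⟨j, j', h1, h2, h3, h4, h5, h6 | h6⟩
    · obtain ⟨P, S, Q, P', Q', p, q, p', q', hw, hw', hpp', hp, hq', hq, hp'⟩ :=
        decomp_of_cross₁ F G j j' h1 h2 h3 h4 h5 h6.1 h6.2
      exact ⟨seg_srcSnk F, seg_srcSnk G, P, S, Q, P', Q', p, q, p', q',
        Or.inl ⟨hw, hw'⟩, hpp', hp, hq', hq, hp'⟩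
    · obtain ⟨P, S, Q, P', Q', p, q, p', q', hw, hw', hpp', hp, hq', hq, hp'⟩ :=
        decomp_of_cross₁ G F j j' h1 h2 (Ne.symm h3)
          (fun k hk1 hk2 => (h4 k hk1 hk2).symm) (Ne.symm h5) h6.1 h6.2
      exact ⟨seg_srcSnk F, seg_srcSnk G, P, S, Q, P', Q', p, q, p', q',
        Or.inr ⟨hw, hw'⟩, hpp', hp, hq', hq, hp'⟩

lemma routeOf_seg {c : ℕ} {A B : Finset (Fin (c + 1))} {w : List (HEdg c 2)}
    (h : RouteOf c A B w) :
    ∃ F : ℕ → Fin 2, w = seg c F 0 ∧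
      (∀ i : Fin (c + 1), (F i.1 = 0 ↔ i ∈ A)) ∧
      (∀ i : Fin (c + 1), (F i.1 = 1 ↔ i ∈ B)) := by
  obtain ⟨F, hF⟩ := goodRoute_eq_seg h.1
  refine ⟨F, hF, fun i => ?_, fun i => ?_⟩
  · have h1 := h.2.1 i
    rw [hF] at h1
    rw [← h1]
    simp [uEdge, mem_inl_seg]
  · have h1 := h.2.2 i
    rw [hF] at h1
    rw [← h1]
    simp [dEdge, mem_inl_seg]

lemma fin2_zero_ne_one : (0 : Fin 2) ≠ 1 := by decide

/-- Part (a) computation: crossing with the route `ρ∘`. -/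
lemma cross_base_iff {m : ℕ} (hm : 1 ≤ m) (F G : ℕ → Fin 2)
    (hG0 : G 0 = 0) (hG1 : ∀ k, 1 ≤ k → k ≤ m + 1 → G k = 1)
    (hFex : ∃ n, n ≤ m + 1 ∧ F n = 0) :
    Cross (m + 1) F G ↔ F 0 ≠ 0 := by
  constructor
  · rintro ⟨j, j', h1, h2, h3, h4, h5, h6⟩ hF0
    rcases Nat.eq_zero_or_pos j with rfl | hj
    · rw [hF0, hG0] at h3
      exact h3 rfl
    · have hGj : G j = 1 := hG1 j hj (by omega)
      have hGj1 : G (j + 1) = 1 := hG1 (j + 1) (by omega) (by omega)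
      have hGj' : G j' = 1 := hG1 j' (by omega) (by omega)
      have hGj'1 : G (j' + 1) = 1 := hG1 (j' + 1) (by omega) (by omega)
      rcases h6 with ⟨h6, -⟩ | ⟨-, h6⟩
      · rw [hGj, hGj1] at h6; exact h6 rfl
      · rw [hGj', hGj'1] at h6; exact h6 rfl
  · intro hF0
    have hF01 : F 0 = 1 := fin2_eq_one_of_ne_zero hF0
    have hex : ∃ n, F n = 0 := ⟨hFex.choose, hFex.choose_spec.2⟩
    have hspec : F (Nat.find hex) = 0 := Nat.find_spec hex
    have hmin : ∀ k, k < Nat.find hex → F k ≠ 0 := fun k hk => Nat.find_min hex hk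
    have hle : Nat.find hex ≤ m + 1 := Nat.find_min' hex hFex.choose_spec.2 |>.trans
      hFex.choose_spec.1
    have h1i : 1 ≤ Nat.find hex := by
      rcases Nat.eq_zero_or_pos (Nat.find hex) with h | h
      · rw [h] at hspec; exact absurd hspec hF0
      · exact h
    obtain ⟨j', hj'⟩ : ∃ j', Nat.find hex = j' + 1 := ⟨Nat.find hex - 1, by omega⟩
    rw [hj'] at hspec hle
    rw [hj'] at hmin
    refine ⟨0, j', by omega, by omega, ?_, ?_, ?_, Or.inl ⟨?_, ?_⟩⟩
    · rw [hF01, hG0]; exact fin2_zero_ne_one.symm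
    · intro k hk1 hk2
      rw [fin2_eq_one_of_ne_zero (hmin k (by omega)),
        hG1 k (by omega) (by omega)]
    · rw [hspec, hG1 (j' + 1) (by omega) (by omega)]
      exact fin2_zero_ne_one
    · rw [hG0, hG1 1 le_rfl (by omega)]
      exact fin2_zero_ne_one
    · rcases Nat.eq_zero_or_pos j' with rfl | hj'
      · rw [hF01, hspec]; exact fin2_zero_ne_one.symm
      · rw [fin2_eq_one_of_ne_zero (hmin j' (by omega)), hspec]
        exact fin2_zero_ne_one.symm

/-- Part (b) computation: crossing is invariant under the shift. -/
lemma cross_shift {m : ℕ} (F G F' G' : ℕ → Fin 2)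
    (h0 : F' 0 = G' 0)
    (hF : ∀ k, k ≤ m → F' (k + 1) = F k)
    (hG : ∀ k, k ≤ m → G' (k + 1) = G k) :
    Cross m F G ↔ Cross (m + 1) F' G' := by
  constructor
  · rintro ⟨j, j', h1, h2, h3, h4, h5, h6⟩
    refine ⟨j + 1, j' + 1, by omega, by omega, ?_, ?_, ?_, ?_⟩
    · rw [hF j (by omega), hG j (by omega)]; exact h3
    · intro k hk1 hk2
      obtain ⟨k₀, rfl⟩ : ∃ k₀, k = k₀ + 1 := ⟨k - 1, by omega⟩
      rw [hF k₀ (by omega), hG k₀ (by omega)]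
      exact h4 k₀ (by omega) (by omega)
    · rw [hF (j' + 1) (by omega), hG (j' + 1) (by omega)]; exact h5
    · rcases h6 with ⟨h6a, h6b⟩ | ⟨h6a, h6b⟩
      · exact Or.inl ⟨by rw [hG j (by omega), hG (j + 1) (by omega)]; exact h6a,
          by rw [hF j' (by omega), hF (j' + 1) (by omega)]; exact h6b⟩
      · exact Or.inr ⟨by rw [hF j (by omega), hF (j + 1) (by omega)]; exact h6a,
          by rw [hG j' (by omega), hG (j' + 1) (by omega)]; exact h6b⟩
  · rintro ⟨j, j', h1, h2, h3, h4, h5, h6⟩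
    have hj : 1 ≤ j := by
      rcases Nat.eq_zero_or_pos j with rfl | hj
      · rw [h0] at h3; exact absurd rfl h3
      · exact hj
    obtain ⟨j₀, rfl⟩ : ∃ j₀, j = j₀ + 1 := ⟨j - 1, by omega⟩
    obtain ⟨j'₀, rfl⟩ : ∃ j'₀, j' = j'₀ + 1 := ⟨j' - 1, by omega⟩
    refine ⟨j₀, j'₀, by omega, by omega, ?_, ?_, ?_, ?_⟩
    · rw [← hF j₀ (by omega), ← hG j₀ (by omega)]; exact h3
    · intro k hk1 hk2
      rw [← hF k (by omega), ← hG k (by omega)]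
      exact h4 (k + 1) (by omega) (by omega)
    · rw [← hF (j'₀ + 1) (by omega), ← hG (j'₀ + 1) (by omega)]; exact h5
    · rcases h6 with ⟨h6a, h6b⟩ | ⟨h6a, h6b⟩
      · exact Or.inl
          ⟨by rw [← hG j₀ (by omega), ← hG (j₀ + 1) (by omega)]; exact h6a,
           by rw [← hF j'₀ (by omega), ← hF (j'₀ + 1) (by omega)]; exact h6b⟩
      · exact Or.inr
          ⟨by rw [← hF j₀ (by omega), ← hF (j₀ + 1) (by omega)]; exact h6a,
           by rw [← hG j'₀ (by omega), ← hG (j'₀ + 1) (by omega)]; exact h6b⟩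

lemma succ_mem_psi_fst {m : ℕ} (A : Finset (Fin (m + 1))) (k : Fin (m + 1)) :
    Fin.succ k ∈ insert 0 (A.image Fin.succ) ↔ k ∈ A := by
  simp only [Finset.mem_insert, Finset.mem_image]
  constructor
  · rintro (h | ⟨a, ha, h⟩)
    · exact absurd h (Fin.succ_ne_zero k)
    · rwa [← Fin.succ_inj.1 h]
  · intro h
    exact Or.inr ⟨k, h, rfl⟩

lemma succ_mem_image_succ {m : ℕ} (B : Finset (Fin (m + 1))) (k : Fin (m + 1)) :
    Fin.succ k ∈ B.image Fin.succ ↔ k ∈ B := by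
  simp only [Finset.mem_image]
  constructor
  · rintro ⟨a, ha, h⟩
    rwa [← Fin.succ_inj.1 h]
  · intro h
    exact ⟨k, h, rfl⟩

end Aux

/-- (a) a good non-exceptional route `ρ_{(A,B)}` of `H_{c,2}` is
compatible with `ρ_∘ = ρ_{({1},{2,…,c+1})}` iff `1 ∈ A`; (b) the map `Ψ` is a
bijection from ordered bipartitions of `{1,…,c}` into nonempty parts onto the
ordered bipartitions `(A′,B′)` of `{1,…,c+1}` into nonempty parts with
`1 ∈ A′ ≠ {1}`, and it preserves and reflects compatibility of the indexed
routes.  (Here `c = m + 1` and everything is 0-indexed.) -/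
theorem statement17 (m : ℕ) (hm : 1 ≤ m) :
    (∀ (w w₀ : List (HEdg (m + 1) 2)) (A B : Finset (Fin (m + 2))),
      A.Nonempty → B.Nonempty → Disjoint A B → A ∪ B = Finset.univ →
      RouteOf (m + 1) A B w →
      RouteOf (m + 1) {0} ({0}ᶜ) w₀ →
      (HCompat (m + 1) w w₀ ↔ (0 : Fin (m + 2)) ∈ A)) ∧
    Set.BijOn (PsiMap m)
      {AB : Finset (Fin (m + 1)) × Finset (Fin (m + 1)) |
        AB.1.Nonempty ∧ AB.2.Nonempty ∧ Disjoint AB.1 AB.2 ∧ AB.1 ∪ AB.2 = Finset.univ}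
      {AB : Finset (Fin (m + 2)) × Finset (Fin (m + 2)) |
        AB.1.Nonempty ∧ AB.2.Nonempty ∧ Disjoint AB.1 AB.2 ∧ AB.1 ∪ AB.2 = Finset.univ ∧
        (0 : Fin (m + 2)) ∈ AB.1 ∧ AB.1 ≠ {0}} ∧
    (∀ A B C D : Finset (Fin (m + 1)),
      A.Nonempty → B.Nonempty → Disjoint A B → A ∪ B = Finset.univ →
      C.Nonempty → D.Nonempty → Disjoint C D → C ∪ D = Finset.univ →
      ∀ w₁ w₂ : List (HEdg m 2),
        RouteOf m A B w₁ → RouteOf m C D w₂ →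
        ∀ w₁' w₂' : List (HEdg (m + 1) 2),
          RouteOf (m + 1) (PsiMap m (A, B)).1 (PsiMap m (A, B)).2 w₁' →
          RouteOf (m + 1) (PsiMap m (C, D)).1 (PsiMap m (C, D)).2 w₂' →
          (HCompat m w₁ w₂ ↔ HCompat (m + 1) w₁' w₂')) := by
  refine ⟨?_, ⟨?_, ?_, ?_⟩, ?_⟩
  · -- part (a)
    intro w w₀ A B hA hB hdisj huniv hw hw₀
    obtain ⟨F, hwF, hFA, hFB⟩ := routeOf_seg hw
    obtain ⟨G, hwG, hGA, hGB⟩ := routeOf_seg hw₀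
    have hG0 : G 0 = 0 := by
      have h1 := hGA 0
      rw [Fin.val_zero] at h1
      exact h1.2 (Finset.mem_singleton_self 0)
    have hG1 : ∀ k, 1 ≤ k → k ≤ m + 1 → G k = 1 := by
      intro k h1 h2
      refine (hGB ⟨k, by omega⟩).2 ?_
      simp only [Finset.mem_compl, Finset.mem_singleton]
      intro hcon
      rw [Fin.ext_iff, Fin.val_zero] at hcon
      simp at hcon
      omega
    have hFex : ∃ n, n ≤ m + 1 ∧ F n = 0 := by
      obtain ⟨i, hi⟩ := hA
      exact ⟨i.1, by have := i.isLt; omega, (hFA i).2 hi⟩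
    have h0A : F 0 = 0 ↔ (0 : Fin (m + 2)) ∈ A := by
      have h1 := hFA 0
      rwa [Fin.val_zero] at h1
    rw [hwF, hwG]
    unfold HCompat
    rw [incompat_iff_cross, cross_base_iff hm F G hG0 hG1 hFex]
    rw [not_ne_iff, h0A]
  · -- MapsTo
    rintro ⟨A, B⟩ ⟨hA, hB, hdisj, huniv⟩
    obtain ⟨a, ha⟩ := hA
    obtain ⟨b, hb⟩ := hB
    refine ⟨⟨0, Finset.mem_insert_self _ _⟩,
      ⟨Fin.succ b, (succ_mem_image_succ B b).2 hb⟩, ?_, ?_,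
      Finset.mem_insert_self _ _, ?_⟩
    · rw [Finset.disjoint_left]
      intro x hx hx'
      rcases Finset.mem_insert.1 hx with rfl | hx
      · obtain ⟨y, _, hy'⟩ := Finset.mem_image.1 hx'
        exact Fin.succ_ne_zero y hy'
      · obtain ⟨y, hy, rfl⟩ := Finset.mem_image.1 hx
        simp only [PsiMap] at hx'
        rw [succ_mem_image_succ] at hx'
        exact (Finset.disjoint_left.1 hdisj hy) hx'
    · ext x
      simp only [Finset.mem_union, Finset.mem_univ, iff_true]
      rcases Fin.eq_zero_or_eq_succ x with rfl | ⟨y, rfl⟩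
      · exact Or.inl (Finset.mem_insert_self _ _)
      · have hy : y ∈ A ∪ B := huniv ▸ Finset.mem_univ y
        rcases Finset.mem_union.1 hy with h | h
        · exact Or.inl (Finset.mem_insert_of_mem ((succ_mem_image_succ A y).2 h))
        · exact Or.inr ((succ_mem_image_succ B y).2 h)
    · intro hcon
      have hmem : Fin.succ a ∈ ({0} : Finset (Fin (m + 2))) :=
        hcon ▸ Finset.mem_insert_of_mem ((succ_mem_image_succ A a).2 ha)
      rw [Finset.mem_singleton] at hmem
      exact Fin.succ_ne_zero a hmem
  · -- InjOn
    rintro ⟨A, B⟩ _ ⟨C, D⟩ _ heq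
    simp only [PsiMap, Prod.mk.injEq] at heq
    obtain ⟨h1, h2⟩ := heq
    have hAC : A = C := by
      ext y
      rw [← succ_mem_psi_fst A y, h1, succ_mem_psi_fst]
    have hBD : B = D := by
      ext y
      rw [← succ_mem_image_succ B y, h2, succ_mem_image_succ]
    rw [hAC, hBD]
  · -- SurjOn
    rintro ⟨A', B'⟩ ⟨hA', hB', hdisj, huniv, h0, hne0⟩
    refine ⟨(Finset.univ.filter (fun i => Fin.succ i ∈ A'),
      Finset.univ.filter (fun i => Fin.succ i ∈ B')), ⟨?_, ?_, ?_, ?_⟩, ?_⟩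
    · -- first part nonempty
      have hex : ∃ x ∈ A', x ≠ 0 := by
        by_contra hcon
        push_neg at hcon
        apply hne0
        ext y
        rw [Finset.mem_singleton]
        exact ⟨fun hy => hcon y hy, fun hy => hy ▸ h0⟩
      obtain ⟨x, hx, hxne⟩ := hex
      rcases Fin.eq_zero_or_eq_succ x with rfl | ⟨y, rfl⟩
      · exact absurd rfl hxne
      · exact ⟨y, Finset.mem_filter.2 ⟨Finset.mem_univ _, hx⟩⟩
    · -- second part nonempty
      obtain ⟨x, hx⟩ := hB'
      have hxne : x ≠ 0 := by
        rintro rfl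
        exact (Finset.disjoint_left.1 hdisj h0) hx
      rcases Fin.eq_zero_or_eq_succ x with rfl | ⟨y, rfl⟩
      · exact absurd rfl hxne
      · exact ⟨y, Finset.mem_filter.2 ⟨Finset.mem_univ _, hx⟩⟩
    · -- disjoint
      rw [Finset.disjoint_left]
      intro x hx hx'
      exact (Finset.disjoint_left.1 hdisj (Finset.mem_filter.1 hx).2)
        (Finset.mem_filter.1 hx').2
    · -- union
      ext y
      simp only [Finset.mem_union, Finset.mem_filter, Finset.mem_univ,
        true_and, iff_true]
      have : Fin.succ y ∈ A' ∪ B' := huniv ▸ Finset.mem_univ _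
      exact Finset.mem_union.1 this
    · -- image equation
      simp only [PsiMap]
      refine Prod.ext ?_ ?_
      · ext x
        rcases Fin.eq_zero_or_eq_succ x with rfl | ⟨y, rfl⟩
        · simp [h0]
        · rw [succ_mem_psi_fst]
          simp only [Finset.mem_filter, Finset.mem_univ, true_and]
      · ext x
        rcases Fin.eq_zero_or_eq_succ x with rfl | ⟨y, rfl⟩
        · simp only [Finset.mem_image]
          constructor
          · rintro ⟨y, _, hy⟩
            exact absurd hy (Fin.succ_ne_zero y)
          · intro hx
            exact absurd hx (fun hx => (Finset.disjoint_left.1 hdisj h0) hx)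
        · rw [succ_mem_image_succ]
          simp only [Finset.mem_filter, Finset.mem_univ, true_and]
  · -- part (b), compatibility transfer
    intro A B C D hA hB hdAB huAB hC hD hdCD huCD w₁ w₂ hw₁ hw₂ w₁' w₂' hw₁' hw₂'
    obtain ⟨F₁, hw1, hF1A, hF1B⟩ := routeOf_seg hw₁
    obtain ⟨F₂, hw2, hF2A, hF2B⟩ := routeOf_seg hw₂
    obtain ⟨F₁', hw1', hF1A', hF1B'⟩ := routeOf_seg hw₁'
    obtain ⟨F₂', hw2', hF2A', hF2B'⟩ := routeOf_seg hw₂'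
    have h10 : F₁' 0 = 0 := by
      have h1 := hF1A' 0
      rw [Fin.val_zero] at h1
      exact h1.2 (Finset.mem_insert_self _ _)
    have h20 : F₂' 0 = 0 := by
      have h1 := hF2A' 0
      rw [Fin.val_zero] at h1
      exact h1.2 (Finset.mem_insert_self _ _)
    have hrel1 : ∀ k, k ≤ m → F₁' (k + 1) = F₁ k := by
      intro k hk
      apply fin2_eq_of_iff
      have e1 := hF1A' (Fin.succ ⟨k, by omega⟩)
      have e2 := hF1A ⟨k, by omega⟩
      rw [Fin.val_succ] at e1
      rw [e1, e2]
      exact succ_mem_psi_fst A ⟨k, by omega⟩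
    have hrel2 : ∀ k, k ≤ m → F₂' (k + 1) = F₂ k := by
      intro k hk
      apply fin2_eq_of_iff
      have e1 := hF2A' (Fin.succ ⟨k, by omega⟩)
      have e2 := hF2A ⟨k, by omega⟩
      rw [Fin.val_succ] at e1
      rw [e1, e2]
      exact succ_mem_psi_fst C ⟨k, by omega⟩
    rw [hw1, hw2, hw1', hw2']
    unfold HCompat
    rw [incompat_iff_cross, incompat_iff_cross]
    exact not_congr (cross_shift F₁ F₂ F₁' F₂' (by rw [h10, h20]) hrel1 hrel2)

end PaperDKK
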